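/- arXiv:1303.0397 — 8 statements merged into one kernel-verified Lean document; each statement's English description precedes it below -/
import Mathlib

section
/- Suppose the clopen subsets of a topological space X form an open basis for its topology. Then X is compact if and only if every ultrafilter of CO(X) has at least one cluster point. -/
open Set Topology BoundedContinuousFunction

/-- An ultrafilter of the Boolean algebra `CO(X)` of clopen subsets of `X`: a family of
clopen sets not containing `∅`, closed under binary intersections, upward closed (within
clopen sets), and containing `U` or `Uᶜ` for every clopen `U`. -/
structure ClopenUltrafilter (X : Type*) [TopologicalSpace X] where
  sets : Set (Set X)
  isClopen_of_mem : ∀ U ∈ sets, IsClopen U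
  empty_not_mem : ∅ ∉ sets
  inter_mem : ∀ U ∈ sets, ∀ V ∈ sets, U ∩ V ∈ sets
  mem_of_superset : ∀ U ∈ sets, ∀ V : Set X, IsClopen V → U ⊆ V → V ∈ sets
  mem_or_compl_mem : ∀ U : Set X, IsClopen U → U ∈ sets ∨ Uᶜ ∈ sets

/-- The topology on `UF(X)` with open basis the sets `{F : U ∈ F}` for `U` clopen. -/
instance (X : Type*) [TopologicalSpace X] : TopologicalSpace (ClopenUltrafilter X) :=
  TopologicalSpace.generateFrom
    {S | ∃ U : Set X, IsClopen U ∧ S = {F : ClopenUltrafilter X | U ∈ F.sets}}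

/-- The principal ultrafilter of clopen sets at a point `x`. -/
def principalCU (X : Type*) [TopologicalSpace X] (x : X) : ClopenUltrafilter X where
  sets := {U : Set X | IsClopen U ∧ x ∈ U}
  isClopen_of_mem := fun _ hU => hU.1
  empty_not_mem := fun h => Set.notMem_empty x h.2
  inter_mem := fun U hU V hV => ⟨hU.1.inter hV.1, hU.2, hV.2⟩
  mem_of_superset := fun U hU V hV hUV => ⟨hV, hUV hU.2⟩
  mem_or_compl_mem := fun U hU => by
    by_cases hx : x ∈ U
    · exact Or.inl ⟨hU, hx⟩
    · exact Or.inr ⟨hU.compl, hx⟩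

/-- A cluster point of an ultrafilter of clopen sets: a point all of whose clopen
neighbourhoods belong to the ultrafilter. -/
def ClopenUltrafilter.IsClusterPoint {X : Type*} [TopologicalSpace X]
    (F : ClopenUltrafilter X) (x : X) : Prop :=
  ∀ U : Set X, IsClopen U → x ∈ U → U ∈ F.sets

/-! In a compact space the members of a clopen ultrafilter `F` are closed, nonempty and directed,
so they have a common point, which is a cluster point because `F` contains `U` or `Uᶜ`.
Conversely, an ultrafilter on `X` converges to any cluster point of its clopen members, since
the clopen sets form a neighbourhood basis. -/

namespace ClopenUltrafilter

variable {X : Type*} [TopologicalSpace X]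

theorem univ_mem (F : ClopenUltrafilter X) : univ ∈ F.sets := by
  simpa [F.empty_not_mem] using F.mem_or_compl_mem ∅ isClopen_empty

theorem nonempty_of_mem (F : ClopenUltrafilter X) {U : Set X} (hU : U ∈ F.sets) : U.Nonempty :=
  nonempty_iff_ne_empty.2 fun h ↦ F.empty_not_mem (h ▸ hU)

theorem isClusterPoint_of_mem_sInter (F : ClopenUltrafilter X) {x : X} (hx : x ∈ ⋂₀ F.sets) :
    F.IsClusterPoint x :=
  fun U hU hxU ↦ (F.mem_or_compl_mem U hU).resolve_right fun hUc ↦ hx _ hUc hxU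

theorem nonempty_sInter [CompactSpace X] (F : ClopenUltrafilter X) : (⋂₀ F.sets).Nonempty :=
  have : Nonempty F.sets := ⟨⟨univ, F.univ_mem⟩⟩
  IsCompact.nonempty_sInter_of_directed_nonempty_isCompact_isClosed
    (fun U hU V hV ↦ ⟨U ∩ V, F.inter_mem U hU V hV, inter_subset_left, inter_subset_right⟩)
    (fun _ ↦ F.nonempty_of_mem) (fun U hU ↦ (F.isClopen_of_mem U hU).isClosed.isCompact)
    (fun U hU ↦ (F.isClopen_of_mem U hU).isClosed)

theorem exists_isClusterPoint [CompactSpace X] (F : ClopenUltrafilter X) :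
    ∃ x, F.IsClusterPoint x :=
  F.nonempty_sInter.imp fun _ ↦ F.isClusterPoint_of_mem_sInter

def ofUltrafilter (f : Ultrafilter X) : ClopenUltrafilter X where
  sets := {U | IsClopen U ∧ U ∈ f}
  isClopen_of_mem _ hU := hU.1
  empty_not_mem h := f.empty_notMem h.2
  inter_mem _ hU _ hV := ⟨hU.1.inter hV.1, Filter.inter_mem hU.2 hV.2⟩
  mem_of_superset _ hU _ hV hUV := ⟨hV, Filter.mem_of_superset hU.2 hUV⟩
  mem_or_compl_mem U hU := (f.mem_or_compl_mem U).imp (⟨hU, ·⟩) (⟨hU.compl, ·⟩)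

theorem le_nhds_of_isClusterPoint_ofUltrafilter
    (hbasis : TopologicalSpace.IsTopologicalBasis {U : Set X | IsClopen U}) {f : Ultrafilter X}
    {x : X} (hx : (ofUltrafilter f).IsClusterPoint x) : ↑f ≤ 𝓝 x :=
  hbasis.nhds_hasBasis.ge_iff.2 fun U ⟨hU, hxU⟩ ↦ (hx U hU hxU : IsClopen U ∧ U ∈ f).2

end ClopenUltrafilter

/-- If the clopen subsets of `X` form an open basis of its topology, then
`X` is compact if and only if every ultrafilter of `CO(X)` has at least one cluster point. -/
theorem compactSpace_iff_forall_clopenUltrafilter_exists_clusterPoint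
    (X : Type*) [TopologicalSpace X]
    (hbasis : TopologicalSpace.IsTopologicalBasis {U : Set X | IsClopen U}) :
    CompactSpace X ↔ ∀ F : ClopenUltrafilter X, ∃ x : X, F.IsClusterPoint x := by
  refine ⟨fun _ F ↦ F.exists_isClusterPoint, fun h ↦ ?_⟩
  rw [← isCompact_univ_iff, isCompact_iff_ultrafilter_le_nhds]
  intro f _
  obtain ⟨x, hx⟩ := h (ClopenUltrafilter.ofUltrafilter f)
  exact ⟨x, mem_univ x, ClopenUltrafilter.le_nhds_of_isClusterPoint_ofUltrafilter hbasis hx⟩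
end

section
/- If m₁ and m₂ are closed prime ideals of C_bd(X,k) (closed with respect to the supremum-norm topology) such that F_{m₁} = F_{m₂}, then m₁ = m₂; that is, the map m ↦ F_m is injective on the set of closed prime ideals of C_bd(X,k). -/
open Set Topology BoundedContinuousFunction

/-- The indicator function of a clopen set, as a bounded continuous `k`-valued function. -/
noncomputable def indicatorBCF {X : Type*} [TopologicalSpace X] (k : Type*) [NormedField k]
    {U : Set X} (hU : IsClopen U) : BoundedContinuousFunction X k where
  toFun := U.indicator 1
  continuous_toFun := continuous_indicator (by simp [hU]) continuous_const.continuousOn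
  map_bounded' := ⟨1, fun x y => by
    by_cases hx : x ∈ U <;> by_cases hy : y ∈ U <;>
      simp [hx, hy, dist_eq_norm, Set.indicator_of_mem, Set.indicator_of_notMem]⟩

/-- The family `F_m = {U ∈ CO(X) : 1_U ∉ m}` attached to an ideal `m` of `C_bd(X,k)`. -/
def idealUF {X : Type*} [TopologicalSpace X] (k : Type*) [NormedField k]
    (m : Ideal (BoundedContinuousFunction X k)) : Set (Set X) :=
  {U : Set X | ∃ hU : IsClopen U, indicatorBCF k hU ∉ m}

/-- `‖f‖_F = inf_{U ∈ F} sup_{x ∈ U} ‖f x‖`. -/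
noncomputable def ufSeminorm {X : Type*} [TopologicalSpace X] (k : Type*) [NormedField k]
    (F : ClopenUltrafilter X) (f : BoundedContinuousFunction X k) : ℝ :=
  ⨅ U ∈ F.sets, ⨆ x ∈ U, ‖f x‖

/-!
A closed ideal `m` of `C_bd(X,k)` is determined by the clopen indicators it contains. Given
`f ∈ m` and `ε > 0`, the set `V = {ε ≤ |f|}` is clopen because balls in the ultrametric field `k`
are clopen; `f` is invertible on `V` with `|1/f| ≤ 1/ε`, so `1_V = f · (1_V / f) ∈ m`, and
`f · 1_V` is within `ε` of `f`. Thus `m` is the closure of the ideal generated by the `1_U` with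
`U ∉ F_m`, and `F_m` determines `m`.
-/

section

variable {X : Type*} [TopologicalSpace X] {k : Type*} [NormedField k]

theorem indicatorBCF_mem_iff_notMem_idealUF {m : Ideal (X →ᵇ k)} {U : Set X} (hU : IsClopen U) :
    indicatorBCF k hU ∈ m ↔ U ∉ idealUF k m := by
  simp [idealUF, hU]

theorem dist_mul_indicatorBCF_le (f : X →ᵇ k) {V : Set X} (hV : IsClopen V) {ε : ℝ} (hε : 0 ≤ ε)
    (hfV : ∀ x ∉ V, ‖f x‖ ≤ ε) : dist f (f * indicatorBCF k hV) ≤ ε := by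
  rw [dist_eq_norm, norm_le hε]
  intro x
  by_cases hx : x ∈ V
  · simp [indicatorBCF, Set.indicator_of_mem hx, hε]
  · simpa [indicatorBCF, Set.indicator_of_notMem hx] using hfV x hx

theorem indicatorBCF_mem_span_of_le_norm (f : X →ᵇ k) {V : Set X} (hV : IsClopen V) {ε : ℝ}
    (hε : 0 < ε) (hfV : ∀ x ∈ V, ε ≤ ‖f x‖) : indicatorBCF k hV ∈ Ideal.span {f} := by
  have hf_ne : ∀ x ∈ V, f x ≠ 0 := fun x hx => norm_pos_iff.1 (hε.trans_le (hfV x hx))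
  have hcont : Continuous (V.indicator fun x => (f x)⁻¹) := by
    refine continuous_indicator (by simp [hV.frontier_eq]) ?_
    rw [hV.isClosed.closure_eq]
    exact f.continuous.continuousOn.inv₀ hf_ne
  have hbound : ∀ x, ‖V.indicator (fun x => (f x)⁻¹) x‖ ≤ ε⁻¹ := by
    intro x
    by_cases hx : x ∈ V
    · simpa [Set.indicator_of_mem hx] using inv_anti₀ hε (hfV x hx)
    · simp [Set.indicator_of_notMem hx, hε.le]
  refine Ideal.mem_span_singleton'.2 ⟨ofNormedAddCommGroup _ hcont ε⁻¹ hbound, ?_⟩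
  ext x
  by_cases hx : x ∈ V
  · simp [indicatorBCF, Set.indicator_of_mem hx, inv_mul_cancel₀ (hf_ne x hx)]
  · simp [indicatorBCF, Set.indicator_of_notMem hx]

variable [IsUltrametricDist k]

theorem isClopen_setOf_le_norm (f : X →ᵇ k) (ε : ℝ) : IsClopen {x | ε ≤ ‖f x‖} := by
  convert ((IsUltrametricDist.isClopen_ball (0 : k) ε).preimage f.continuous).compl using 1
  ext x
  simp

theorem le_of_idealUF_subset {m₁ m₂ : Ideal (X →ᵇ k)}
    (hc₂ : IsClosed (m₂ : Set (X →ᵇ k))) (h : idealUF k m₂ ⊆ idealUF k m₁) : m₁ ≤ m₂ := by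
  intro f hf
  rw [← SetLike.mem_coe, ← hc₂.closure_eq, Metric.mem_closure_iff]
  intro ε hε
  have hV := isClopen_setOf_le_norm f (ε / 2)
  have h₁ : indicatorBCF k hV ∈ m₁ := (Ideal.span_singleton_le_iff_mem m₁).2 hf
    (indicatorBCF_mem_span_of_le_norm f hV (half_pos hε) fun _ hx => hx)
  have h₂ : indicatorBCF k hV ∈ m₂ := (indicatorBCF_mem_iff_notMem_idealUF hV).2
    (mt (@h _) ((indicatorBCF_mem_iff_notMem_idealUF hV).1 h₁))
  have hdist := dist_mul_indicatorBCF_le f hV (half_pos hε).le fun _ hx => (not_le.1 hx).le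
  exact ⟨_, m₂.mul_mem_left f h₂, hdist.trans_lt (half_lt_self hε)⟩

end

theorem idealUF_injective_on_closed_primes_general {X : Type*} [TopologicalSpace X]
    (k : Type*) [NormedField k] [IsUltrametricDist k]
    (m₁ m₂ : Ideal (BoundedContinuousFunction X k))
    (hc₁ : IsClosed (m₁ : Set (BoundedContinuousFunction X k)))
    (hc₂ : IsClosed (m₂ : Set (BoundedContinuousFunction X k)))
    (h : idealUF k m₁ = idealUF k m₂) : m₁ = m₂ :=
  le_antisymm (le_of_idealUF_subset hc₂ h.ge) (le_of_idealUF_subset hc₁ h.le)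

/-- If `m₁` and `m₂` are closed prime ideals of `C_bd(X,k)` with
`F_{m₁} = F_{m₂}`, then `m₁ = m₂`; the map `m ↦ F_m` is injective on closed prime ideals. -/
theorem idealUF_injective_on_closed_primes {X : Type*} [TopologicalSpace X]
    (k : Type*) [NormedField k] [CompleteSpace k] [IsUltrametricDist k]
    (m₁ m₂ : Ideal (BoundedContinuousFunction X k)) (h₁ : m₁.IsPrime) (h₂ : m₂.IsPrime)
    (hc₁ : IsClosed (m₁ : Set (BoundedContinuousFunction X k)))
    (hc₂ : IsClosed (m₂ : Set (BoundedContinuousFunction X k)))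
    (h : idealUF k m₁ = idealUF k m₂) : m₁ = m₂ :=
  idealUF_injective_on_closed_primes_general k m₁ m₂ hc₁ hc₂ h
end

section
/- Every prime ideal of C_bd(X,k) that is closed with respect to the supremum-norm topology is a maximal ideal. -/
open Set Topology BoundedContinuousFunction

/-! For `f ∉ m` and `ε > 0` let `U_ε = {x | ‖f x‖ ≤ ε}`, clopen because `k` is ultrametric.
If `1_{U_ε} ∈ m` for some `ε`, then `f` is invertible off `U_ε`, and `f g + 1_{U_ε} = 1` shows
that `m + (f)` is the whole ring. Otherwise primality puts `1_{U_εᶜ}` into `m` for every `ε`,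
and `f · 1_{U_εᶜ} ∈ m` is `ε`-close to `f`, so `f` lies in the closure of `m`, which is `m`. -/

section IndicatorBCF

variable {X : Type*} [TopologicalSpace X] {k : Type*} [NormedField k] {U : Set X}

lemma indicatorBCF_apply (hU : IsClopen U) (x : X) : indicatorBCF k hU x = U.indicator 1 x :=
  rfl

lemma indicatorBCF_mul_compl (hU : IsClopen U) :
    indicatorBCF k hU * indicatorBCF k hU.compl = 0 := by
  ext x
  by_cases hx : x ∈ U <;> simp [indicatorBCF_apply, hx]

lemma indicatorBCF_add_compl (hU : IsClopen U) :
    indicatorBCF k hU + indicatorBCF k hU.compl = 1 := by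
  ext x
  by_cases hx : x ∈ U <;> simp [indicatorBCF_apply, hx]

lemma norm_mul_indicatorBCF_le {f : X →ᵇ k} {ε : ℝ} (hε : 0 ≤ ε) (hU : IsClopen U)
    (hf : ∀ x ∈ U, ‖f x‖ ≤ ε) : ‖f * indicatorBCF k hU‖ ≤ ε := by
  refine (norm_le hε).2 fun x => ?_
  by_cases hx : x ∈ U <;> simp [indicatorBCF_apply, hx, hf x, hε]

lemma indicatorBCF_compl_mem_of_notMem {m : Ideal (X →ᵇ k)} (hm : m.IsPrime) (hU : IsClopen U)
    (hUm : indicatorBCF k hU ∉ m) : indicatorBCF k hU.compl ∈ m :=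
  (hm.mem_or_mem (by rw [indicatorBCF_mul_compl]; exact m.zero_mem)).resolve_left hUm

end IndicatorBCF

section

variable {X : Type*} [TopologicalSpace X] {k : Type*} [NormedField k]

lemma isClopen_setOf_norm_le [IsUltrametricDist k] (f : X →ᵇ k) {ε : ℝ} (hε : 0 < ε) :
    IsClopen {x | ‖f x‖ ≤ ε} := by
  simpa [Set.preimage, Metric.closedBall] using
    (IsUltrametricDist.isClopen_closedBall (0 : k) hε.ne').preimage f.continuous

lemma exists_mul_add_indicatorBCF_eq_one {f : X →ᵇ k} {U : Set X} (hU : IsClopen U) {ε : ℝ}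
    (hε : 0 < ε) (hf : ∀ x ∉ U, ε ≤ ‖f x‖) : ∃ g : X →ᵇ k, f * g + indicatorBCF k hU = 1 := by
  classical
  have hf0 : ∀ x ∉ U, f x ≠ 0 := fun x hx => norm_pos_iff.1 (hε.trans_le (hf x hx))
  have hcont : Continuous fun x => if x ∈ U then (0 : k) else (f x)⁻¹ :=
    continuous_if (by simp [hU.frontier_eq]) continuousOn_const
      (by rw [show {x | x ∉ U} = Uᶜ from rfl, hU.compl.isClosed.closure_eq]
          exact f.continuous.continuousOn.inv₀ hf0)
  have hbound : ∀ x, ‖if x ∈ U then (0 : k) else (f x)⁻¹‖ ≤ ε⁻¹ := by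
    intro x
    by_cases hx : x ∈ U
    · simp [hx, hε.le]
    · simpa [hx] using inv_anti₀ hε (hf x hx)
  refine ⟨.ofNormedAddCommGroup _ hcont ε⁻¹ hbound, ?_⟩
  ext x
  by_cases hx : x ∈ U
  · simp [indicatorBCF_apply, hx]
  · simp [indicatorBCF_apply, hx, hf0 x hx]

variable {m : Ideal (X →ᵇ k)}

lemma exists_mem_norm_sub_le (hm : m.IsPrime) {f : X →ᵇ k} {U : Set X} (hU : U ∈ idealUF k m)
    {ε : ℝ} (hε : 0 ≤ ε) (hf : ∀ x ∈ U, ‖f x‖ ≤ ε) : ∃ g ∈ m, ‖f - g‖ ≤ ε := by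
  obtain ⟨hU, hUm⟩ := hU
  refine ⟨f * indicatorBCF k hU.compl,
    m.mul_mem_left f (indicatorBCF_compl_mem_of_notMem hm hU hUm), ?_⟩
  have : f - f * indicatorBCF k hU.compl = f * indicatorBCF k hU := by
    rw [sub_eq_iff_eq_add, ← mul_add, indicatorBCF_add_compl, mul_one]
  exact this ▸ norm_mul_indicatorBCF_le hε hU hf

lemma mem_closure_of_forall_exists_mem_idealUF (hm : m.IsPrime) {f : X →ᵇ k}
    (h : ∀ ε > 0, ∃ U ∈ idealUF k m, ∀ x ∈ U, ‖f x‖ ≤ ε) : f ∈ closure (m : Set (X →ᵇ k)) := by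
  refine Metric.mem_closure_iff.2 fun ε hε => ?_
  obtain ⟨U, hU, hf⟩ := h (ε / 2) (half_pos hε)
  obtain ⟨g, hg, hfg⟩ := exists_mem_norm_sub_le hm hU (half_pos hε).le hf
  exact ⟨g, hg, dist_eq_norm f g ▸ hfg.trans_lt (half_lt_self hε)⟩

end

theorem isMaximal_of_isClosed_isPrime_general {X : Type*} [TopologicalSpace X]
    (k : Type*) [NormedField k] [IsUltrametricDist k]
    (m : Ideal (BoundedContinuousFunction X k)) (hm : m.IsPrime)
    (hc : IsClosed (m : Set (BoundedContinuousFunction X k))) : m.IsMaximal := by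
  refine Ideal.isMaximal_iff.2 ⟨fun h => hm.ne_top ((Ideal.eq_top_iff_one m).2 h),
    fun J f hmJ hfm hfJ => ?_⟩
  by_cases h : ∀ ε > 0, {x | ‖f x‖ ≤ ε} ∈ idealUF k m
  · exact absurd (hc.closure_subset (mem_closure_of_forall_exists_mem_idealUF hm
      fun ε hε => ⟨_, h ε hε, fun _ hx => hx⟩)) hfm
  push Not at h
  obtain ⟨ε, hε, hUm⟩ := h
  have hU := isClopen_setOf_norm_le f hε
  have h1U : indicatorBCF k hU ∈ m := not_not.1 fun h => hUm ⟨hU, h⟩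
  obtain ⟨g, hg⟩ := exists_mul_add_indicatorBCF_eq_one hU hε fun x hx => (not_le.1 hx).le
  exact hg ▸ J.add_mem (J.mul_mem_right g hfJ) (hmJ h1U)

/-- Every prime ideal of `C_bd(X,k)` that is closed with respect to the
supremum-norm topology is a maximal ideal. -/
theorem isMaximal_of_isClosed_isPrime {X : Type*} [TopologicalSpace X]
    (k : Type*) [NormedField k] [CompleteSpace k] [IsUltrametricDist k]
    (m : Ideal (BoundedContinuousFunction X k)) (hm : m.IsPrime)
    (hc : IsClosed (m : Set (BoundedContinuousFunction X k))) : m.IsMaximal :=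
  isMaximal_of_isClosed_isPrime_general k m hm hc
end

section
/- For every bounded continuous function f ∈ C_bd(X,k), there exists a unique continuous function g : SC_k(X) → k such that f = g ∘ ι_k; moreover sup_{y ∈ SC_k(X)} |g(y)| = sup_{x ∈ X} |f(x)|. -/
open Set Topology BoundedContinuousFunction

/-- The evaluation map `x ↦ (f(x))_f` from `X` into the product of copies of the closed unit
ball `k° = {a : k, ‖a‖ ≤ 1}` indexed by the continuous maps `X → k°`. -/
def scEval (X : Type*) [TopologicalSpace X] (k : Type*) [NormedField k] :
    X → (C(X, (Metric.closedBall (0 : k) 1 : Set k)) → (Metric.closedBall (0 : k) 1 : Set k)) :=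
  fun x f => f x

/-- `SC_k(X)`: the closure of the image of the evaluation map
`X → (k°)^{C(X,k°)}`, a compactification of `X`. -/
def SCk (X : Type*) [TopologicalSpace X] (k : Type*) [NormedField k] :
    Set (C(X, (Metric.closedBall (0 : k) 1 : Set k)) → (Metric.closedBall (0 : k) 1 : Set k)) :=
  closure (Set.range (scEval X k))

/-- The structure map `ι_k : X → SC_k(X)`. -/
def scIota (X : Type*) [TopologicalSpace X] (k : Type*) [NormedField k] : X → SCk X k :=
  fun x => ⟨scEval X k x, subset_closure (Set.mem_range_self x)⟩

theorem denseRange_scIota (X : Type*) [TopologicalSpace X] (k : Type*) [NormedField k] :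
    DenseRange (scIota X k) := by
  intro y
  rw [closure_subtype]
  have h : Subtype.val '' Set.range (scIota X k) = Set.range (scEval X k) := by
    rw [← Set.range_comp]
    rfl
  rw [h]
  exact y.2


/-- Every bounded continuous function `f ∈ C_bd(X,k)` extends uniquely to a
continuous function `g : SC_k(X) → k` with `f = g ∘ ι_k`; moreover the extension has the same
supremum: `sup_{y ∈ SC_k(X)} ‖g y‖ = sup_{x ∈ X} ‖f x‖`. -/
theorem SCk_extension_property {X : Type*} [TopologicalSpace X]
    (k : Type*) [NormedField k] [CompleteSpace k] [IsUltrametricDist k]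
    (f : BoundedContinuousFunction X k) :
    (∃! g : C(SCk X k, k), ∀ x : X, g (scIota X k x) = f x) ∧
    (∀ g : C(SCk X k, k), (∀ x : X, g (scIota X k x) = f x) →
      (⨆ y : SCk X k, ‖g y‖) = ⨆ x : X, ‖f x‖) := by
  obtain ⟨c, hc0, hc⟩ : ∃ c : k, c ≠ 0 ∧ ∀ x, ‖f x‖ ≤ ‖c‖ := by
    by_cases h : ∀ x, ‖f x‖ ≤ 1
    · exact ⟨1, one_ne_zero, by simpa using h⟩
    · push_neg at h
      obtain ⟨x₀, hx₀⟩ := h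
      obtain ⟨n, hn⟩ := pow_unbounded_of_one_lt ‖f‖ hx₀
      refine ⟨(f x₀) ^ n, pow_ne_zero _ ?_, fun x => ?_⟩
      · intro h0
        rw [h0, norm_zero] at hx₀; linarith
      · rw [norm_pow]
        exact (f.norm_coe_le_norm x).trans hn.le
  have hcne : ‖c‖ ≠ 0 := norm_ne_zero_iff.mpr hc0
  have hmem : ∀ x, c⁻¹ * f x ∈ Metric.closedBall (0 : k) 1 := fun x => by
    rw [Metric.mem_closedBall, dist_zero_right, norm_mul, norm_inv]
    calc ‖c‖⁻¹ * ‖f x‖ ≤ ‖c‖⁻¹ * ‖c‖ :=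
          mul_le_mul_of_nonneg_left (hc x) (inv_nonneg.mpr (norm_nonneg c))
      _ = 1 := inv_mul_cancel₀ hcne
  set F : C(X, (Metric.closedBall (0 : k) 1 : Set k)) :=
    ⟨fun x => ⟨c⁻¹ * f x, hmem x⟩,
      Continuous.subtype_mk (continuous_const.mul f.continuous) _⟩ with hF
  set g : C(SCk X k, k) :=
    ⟨fun y => c * (y.1 F : k),
      continuous_const.mul (continuous_subtype_val.comp
        ((continuous_apply F).comp continuous_subtype_val))⟩ with hgdef
  have hg : ∀ x, g (scIota X k x) = f x := fun x => by
    show c * (c⁻¹ * f x) = f x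
    rw [← mul_assoc, mul_inv_cancel₀ hc0, one_mul]
  have hbd : ∀ g' : C(SCk X k, k), (∀ x, g' (scIota X k x) = f x) →
      ∀ y : SCk X k, ‖g' y‖ ≤ ‖f‖ := by
    intro g' hg' y
    have hclosed : IsClosed {y : SCk X k | ‖g' y‖ ≤ ‖f‖} :=
      isClosed_le (g'.continuous.norm) continuous_const
    have hsub : Set.range (scIota X k) ⊆ {y : SCk X k | ‖g' y‖ ≤ ‖f‖} := by
      rintro _ ⟨x, rfl⟩
      simp only [Set.mem_setOf_eq, hg' x]
      exact f.norm_coe_le_norm x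
    have hy : y ∈ closure {y : SCk X k | ‖g' y‖ ≤ ‖f‖} :=
      closure_mono hsub (denseRange_scIota X k y)
    rwa [hclosed.closure_eq] at hy
  have huniq : ∀ g' : C(SCk X k, k), (∀ x, g' (scIota X k x) = f x) → g' = g := by
    intro g' hg'
    exact ContinuousMap.coe_injective ((denseRange_scIota X k).equalizer g'.continuous
      g.continuous (funext fun x => (hg' x).trans (hg x).symm))
  refine ⟨⟨g, hg, huniq⟩, ?_⟩
  intro g' hg'
  rw [← f.norm_eq_iSup_norm]
  rcases isEmpty_or_nonempty X with hX | hX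
  · have hE : IsEmpty (SCk X k) := by
      constructor
      rintro ⟨y, hy⟩
      rw [SCk, Set.range_eq_empty (scEval X k), closure_empty] at hy
      exact hy
    rw [Real.iSup_of_isEmpty]
    rw [f.norm_eq_iSup_norm, Real.iSup_of_isEmpty]
  · have hne : Nonempty (SCk X k) := ⟨scIota X k (Classical.arbitrary X)⟩
    have hba : BddAbove (Set.range fun y : SCk X k => ‖g' y‖) :=
      ⟨‖f‖, by rintro _ ⟨y, rfl⟩; exact hbd g' hg' y⟩
    apply le_antisymm
    · exact ciSup_le fun y => hbd g' hg' y
    · have h0 : (0 : ℝ) ≤ ⨆ y : SCk X k, ‖g' y‖ :=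
        le_ciSup_of_le hba (Classical.arbitrary _) (norm_nonneg _)
      refine (f.norm_le h0).mpr fun x => ?_
      rw [← hg' x]
      exact le_ciSup hba (scIota X k x)
end

section
/- Suppose k is a finite field equipped with the trivial absolute value or a local field. Then SC_k(X) together with ι_k : X → SC_k(X) is the universal totally disconnected Hausdorff compactification of X: for every totally disconnected compact Hausdorff topological space Y and every continuous map f : X → Y, there exists a unique continuous map g : SC_k(X) → Y such that f = g ∘ ι_k. -/
open Set Topology BoundedContinuousFunction

/-- `k` is a finite field equipped with the trivial absolute value. -/
def IsTriviallyValuedFiniteField (k : Type*) [NormedField k] : Prop :=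
  Finite k ∧ ∀ a : k, a ≠ 0 → ‖a‖ = 1

/-- `k` is a nonarchimedean local field: together with an ambient completeness assumption,
this says that `k` is a complete discretely valued field (the value group of `k` is generated
by the norm of a uniformizer `π`) whose residue field is finite (the unit ball is covered by
finitely many open unit balls). -/
def IsNALocalField (k : Type*) [NormedField k] : Prop :=
  (∃ π : k, 0 < ‖π‖ ∧ ‖π‖ < 1 ∧ ∀ a : k, a ≠ 0 → ∃ n : ℤ, ‖a‖ = ‖π‖ ^ n) ∧
  (∃ S : Finset k, ∀ a : k, ‖a‖ ≤ 1 → ∃ s ∈ S, ‖a - s‖ < 1)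

/-- If `k` is a finite field with the trivial absolute value or a local
field, then `SC_k(X)` together with `ι_k : X → SC_k(X)` is the universal totally disconnected
Hausdorff compactification of `X`: every continuous map from `X` to a totally disconnected
compact Hausdorff space `Y` factors uniquely through a continuous map `SC_k(X) → Y`. -/
theorem SCk_universal_property {X : Type*} [TopologicalSpace X]
    (k : Type*) [NormedField k] [CompleteSpace k] [IsUltrametricDist k]
    (hk : IsTriviallyValuedFiniteField k ∨ IsNALocalField k)
    (Y : Type*) [TopologicalSpace Y] [CompactSpace Y] [T2Space Y]
    [TotallyDisconnectedSpace Y] (f : X → Y) (hf : Continuous f) :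
    ∃! g : SCk X k → Y, Continuous g ∧ f = g ∘ scIota X k := by
  classical
  have h0 : (0:k) ∈ Metric.closedBall (0 : k) 1 := by simp
  have h1 : (1:k) ∈ Metric.closedBall (0 : k) 1 := by simp
  set K := (Metric.closedBall (0 : k) 1 : Set k) with hKdef
  let I := {U : Set Y // IsClopen U}
  let ind : I → Y → K := fun U y => if y ∈ U.1 then ⟨1, h1⟩ else ⟨0, h0⟩
  have ind_cont : ∀ U : I, Continuous (ind U) := by
    intro U
    have heq : ind U = (fun b : Bool => if b then (⟨1, h1⟩ : K) else ⟨0, h0⟩) ∘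
        (U.1.boolIndicator) := by
      funext y
      by_cases h : y ∈ U.1 <;> simp [ind, Set.boolIndicator, h]
    rw [heq]
    exact continuous_of_discreteTopology.comp
      ((continuous_boolIndicator_iff_isClopen _).mpr U.2)
  let e : Y → (I → K) := fun y U => ind U y
  have e_cont : Continuous e := continuous_pi fun U => ind_cont U
  have e_inj : Function.Injective e := by
    intro y y' h
    by_contra hne
    obtain ⟨U, hU, hy, hy'⟩ := exists_isClopen_of_totally_separated hne
    have h2 := congrFun h ⟨U, hU⟩
    simp only [e, ind, hy, hy'.out, if_true, if_false] at h2
    exact one_ne_zero (Subtype.ext_iff.mp h2)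
  let fc : I → C(X, K) := fun U => ⟨fun x => ind U (f x), (ind_cont U).comp hf⟩
  let H : (C(X, K) → K) → (I → K) := fun p U => p (fc U)
  have H_cont : Continuous H := continuous_pi fun U => continuous_apply (fc U)
  have hHe : ∀ x : X, H (scEval X k x) = e (f x) := fun x => rfl
  have hrange_closed : IsClosed (Set.range e) := (isCompact_range e_cont).isClosed
  have hmem : ∀ z : SCk X k, H z.1 ∈ Set.range e := by
    intro z
    have hz : H z.1 ∈ closure (H '' (Set.range (scEval X k))) :=
      (image_closure_subset_closure_image H_cont) ⟨z.1, z.2, rfl⟩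
    refine hrange_closed.closure_subset_iff.mpr ?_ hz
    rintro _ ⟨_, ⟨x, rfl⟩, rfl⟩
    exact ⟨f x, (hHe x).symm⟩
  let eEquiv : Y ≃ Set.range e := Equiv.ofInjective e e_inj
  have eEquiv_cont : Continuous (eEquiv : Y → Set.range e) := by
    have hco : (eEquiv : Y → Set.range e) = fun y => ⟨e y, Set.mem_range_self y⟩ := by
      funext y; exact Subtype.ext rfl
    rw [hco]; exact e_cont.subtype_mk _
  let eHomeo : Y ≃ₜ Set.range e := Continuous.homeoOfEquivCompactToT2 eEquiv_cont
  let g : SCk X k → Y := fun z => eHomeo.symm ⟨H z.1, hmem z⟩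
  have g_cont : Continuous g :=
    eHomeo.symm.continuous.comp
      (Continuous.subtype_mk (H_cont.comp continuous_subtype_val) _)
  have hcomm : f = g ∘ scIota X k := by
    funext x
    have hx : (⟨H (scEval X k x), hmem (scIota X k x)⟩ : Set.range e) = eHomeo (f x) :=
      Subtype.ext (hHe x)
    show f x = eHomeo.symm ⟨H (scEval X k x), hmem (scIota X k x)⟩
    rw [hx, Homeomorph.symm_apply_apply]
  have hdense : Dense (Set.range (scIota X k)) := by
    intro z
    rw [closure_subtype]
    have himg : Subtype.val '' (Set.range (scIota X k)) = Set.range (scEval X k) := by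
      ext p
      constructor
      · rintro ⟨w, ⟨x, rfl⟩, rfl⟩; exact ⟨x, rfl⟩
      · rintro ⟨x, rfl⟩; exact ⟨scIota X k x, ⟨x, rfl⟩, rfl⟩
    rw [himg]
    exact z.2
  refine ⟨g, ⟨g_cont, hcomm⟩, ?_⟩
  rintro g' ⟨g'_cont, hg'⟩
  refine g'_cont.ext_on hdense g_cont ?_
  rintro _ ⟨x, rfl⟩
  have h1' := congrFun hg' x
  have h2' := congrFun hcomm x
  exact h1'.symm.trans h2'
end

section
/- Suppose k is a finite field equipped with the trivial absolute value or a local field. Then every maximal ideal m of C_bd(X,k) has codimension 1; that is, the composite k-algebra homomorphism k → C_bd(X,k) → C_bd(X,k)/m is bijective. -/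
open Metric

namespace Ideal

variable {k A : Type*} [NormedField k] [NormedCommRing A] [NormedAlgebra k A]
  [HasSummableGeomSeries A]

theorem norm_le_norm_algebraMap_sub {I : Ideal A} (hI : I ≠ ⊤) (c : k) {h : A} (hh : h ∈ I) :
    ‖c‖ ≤ ‖algebraMap k A c - h‖ := by
  rcases eq_or_ne c 0 with rfl | hc
  · simp
  by_contra! hlt
  refine hI (I.eq_top_of_norm_lt_one (I.smul_of_tower_mem c⁻¹ hh) ?_)
  have : 1 - c⁻¹ • h = c⁻¹ • (algebraMap k A c - h) := by
    rw [smul_sub, Algebra.algebraMap_eq_smul_one, smul_smul, inv_mul_cancel₀ hc, one_smul]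
  rw [this, norm_smul, norm_inv]
  exact (inv_mul_lt_one₀ (norm_pos_iff.mpr hc)).mpr hlt

theorem norm_le_norm_mk_algebraMap {I : Ideal A} (hI : I ≠ ⊤) (c : k) :
    ‖c‖ ≤ ‖Ideal.Quotient.mk I (algebraMap k A c)‖ := by
  refine le_of_forall_pos_lt_add fun ε hε => ?_
  obtain ⟨r, hr, hlt⟩ := Ideal.Quotient.norm_mk_lt (Ideal.Quotient.mk I (algebraMap k A c)) hε
  have hmem : algebraMap k A c - r ∈ I := Ideal.Quotient.eq.mp hr.symm
  calc ‖c‖ ≤ ‖algebraMap k A c - (algebraMap k A c - r)‖ := norm_le_norm_algebraMap_sub hI c hmem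
    _ = ‖r‖ := by rw [sub_sub_cancel]
    _ < _ := hlt

theorem exists_sub_algebraMap_mem_of_approx [CompleteSpace k] {I : Ideal A}
    [IsClosed (I : Set A)] (hI : I ≠ ⊤) (f : A)
    (hf : ∀ ε > 0, ∃ c : k, ∃ h ∈ I, ‖f - algebraMap k A c - h‖ ≤ ε) :
    ∃ c : k, f - algebraMap k A c ∈ I := by
  have hanti : AntilipschitzWith 1 (algebraMap k (A ⧸ I)) :=
    AddMonoidHomClass.antilipschitz_of_bound _ fun c => by
      simpa [← Ideal.Quotient.mk_algebraMap] using norm_le_norm_mk_algebraMap hI c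
  have hclosed : IsClosed (Set.range (algebraMap k (A ⧸ I))) :=
    hanti.isClosed_range <|
      uniformContinuous_addMonoidHom_of_continuous (continuous_algebraMap k (A ⧸ I))
  have hdense : Ideal.Quotient.mk I f ∈ closure (Set.range (algebraMap k (A ⧸ I))) := by
    refine Metric.mem_closure_iff.mpr fun ε hε => ?_
    obtain ⟨c, h, hh, hle⟩ := hf (ε / 2) (half_pos hε)
    refine ⟨_, ⟨c, rfl⟩, lt_of_le_of_lt (le_trans ?_ hle) (half_lt_self hε)⟩
    have hmk : Ideal.Quotient.mk I (f - algebraMap k A c - h)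
        = Ideal.Quotient.mk I f - algebraMap k (A ⧸ I) c := by
      rw [map_sub, Ideal.Quotient.eq_zero_iff_mem.mpr hh, sub_zero, map_sub,
        Ideal.Quotient.mk_algebraMap]
    rw [dist_eq_norm, ← hmk]
    exact Ideal.Quotient.norm_mk_le I _
  obtain ⟨c, hc⟩ := hclosed.closure_subset hdense
  exact ⟨c, Ideal.Quotient.eq.mp hc.symm⟩

end Ideal

namespace BoundedContinuousFunction

variable {X : Type*} [TopologicalSpace X]

noncomputable def clopenIndicator {β : Type*} [PseudoMetricSpace β] [Zero β] [One β]
    (U : Set X) (hU : IsClopen U) : X →ᵇ β where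
  toFun := U.indicator 1
  continuous_toFun := continuous_indicator (by simp [hU]) continuous_const.continuousOn
  map_bounded' := ⟨dist (1 : β) 0, fun x y => by
    by_cases hx : x ∈ U <;> by_cases hy : y ∈ U <;> simp [hx, hy, dist_comm]⟩

@[simp]
theorem clopenIndicator_apply {β : Type*} [PseudoMetricSpace β] [Zero β] [One β]
    (U : Set X) (hU : IsClopen U) (x : X) :
    (clopenIndicator U hU : X →ᵇ β) x = U.indicator 1 x := rfl

theorem exists_one_sub_clopenIndicator_mem {R : Type*} [NormedCommRing R]
    {P : Ideal (X →ᵇ R)} (hP : P.IsPrime) {ι : Type*} [Finite ι] {U : ι → Set X}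
    (hU : ∀ i, IsClopen (U i)) (hcover : ∀ x, ∃ i, x ∈ U i) :
    ∃ i, 1 - clopenIndicator (U i) (hU i) ∈ P := by
  have := Fintype.ofFinite ι
  have hprod : ∏ i, (1 - clopenIndicator (U i) (hU i) : X →ᵇ R) = 0 := by
    ext x
    obtain ⟨i, hi⟩ := hcover x
    simpa [prod_apply] using Finset.prod_eq_zero (Finset.mem_univ i) (by simp [hi])
  obtain ⟨i, -, hi⟩ := hP.prod_mem_iff.mp (hprod ▸ P.zero_mem)
  exact ⟨i, hi⟩

variable {k : Type*} [NormedField k] [IsUltrametricDist k]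

theorem exists_norm_sub_algebraMap_sub_le_of_cover {P : Ideal (X →ᵇ k)} (hP : P.IsPrime)
    (f : X →ᵇ k) {ι : Type*} [Finite ι] (t : ι → k) {r : ℝ} (hr : 0 ≤ r)
    (hcover : ∀ x, ∃ i, f x ∈ ball (t i) r) :
    ∃ c : k, ∃ h ∈ P, ‖f - algebraMap k (X →ᵇ k) c - h‖ ≤ r := by
  have hU i : IsClopen (f ⁻¹' ball (t i) r) :=
    (IsUltrametricDist.isClopen_ball (t i) r).preimage f.continuous
  obtain ⟨i, hi⟩ := exists_one_sub_clopenIndicator_mem hP hU hcover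
  set e : X →ᵇ k := clopenIndicator _ (hU i)
  refine ⟨t i, (f - algebraMap k _ (t i)) * (1 - e), P.mul_mem_left _ hi, ?_⟩
  rw [show ∀ g : X →ᵇ k, g - g * (1 - e) = g * e from fun g => by ring]
  refine (norm_le hr).mpr fun x => ?_
  by_cases hx : x ∈ f ⁻¹' ball (t i) r
  · simpa [e, hx, Algebra.algebraMap_eq_smul_one, ← dist_eq_norm] using (mem_ball.mp hx).le
  · simp [e, hx, hr]

theorem exists_norm_sub_algebraMap_sub_le [ProperSpace k] {P : Ideal (X →ᵇ k)}
    (hP : P.IsPrime) (f : X →ᵇ k) {ε : ℝ} (hε : 0 < ε) :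
    ∃ c : k, ∃ h ∈ P, ‖f - algebraMap k (X →ᵇ k) c - h‖ ≤ ε := by
  obtain ⟨T, -, hT, hcover⟩ := finite_cover_balls_of_compact (isCompact_closedBall (0 : k) ‖f‖) hε
  have := hT.to_subtype
  refine exists_norm_sub_algebraMap_sub_le_of_cover hP f ((↑) : T → k) hε.le fun x => ?_
  obtain ⟨t, ht, hx⟩ := Set.mem_iUnion₂.mp (hcover (by simpa using f.norm_coe_le_norm x))
  exact ⟨⟨t, ht⟩, hx⟩

end BoundedContinuousFunction

section LocalField

variable {k : Type*} [NormedField k] {π : k}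

theorem norm_le_norm_uniformizer_of_norm_lt_one (hπ0 : 0 < ‖π‖) (hπ1 : ‖π‖ < 1)
    (hval : ∀ a : k, a ≠ 0 → ∃ n : ℤ, ‖a‖ = ‖π‖ ^ n) {a : k} (ha : ‖a‖ < 1) : ‖a‖ ≤ ‖π‖ := by
  rcases eq_or_ne a 0 with rfl | hne
  · simp
  obtain ⟨n, hn⟩ := hval a hne
  rw [hn] at ha ⊢
  have h1 : 1 ≤ n := by
    by_contra! hn0
    exact ha.not_ge (one_le_zpow_of_nonpos₀ hπ0 hπ1.le (by omega))
  simpa using zpow_le_zpow_right_of_le_one₀ hπ0 hπ1.le h1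

theorem exists_finset_forall_norm_sub_le_pow {S : Finset k}
    (hS : ∀ a : k, ‖a‖ ≤ 1 → ∃ s ∈ S, ‖a - s‖ ≤ ‖π‖) (hπ : π ≠ 0) (n : ℕ) :
    ∃ T : Finset k, ∀ a : k, ‖a‖ ≤ 1 → ∃ t ∈ T, ‖a - t‖ ≤ ‖π‖ ^ n := by
  induction n with
  | zero => exact ⟨{0}, fun a ha => ⟨0, Finset.mem_singleton_self 0, by simpa using ha⟩⟩
  | succ n ih =>
    classical
    obtain ⟨T, hT⟩ := ih
    refine ⟨(T ×ˢ S).image fun p => p.1 + π ^ n * p.2, fun a ha => ?_⟩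
    obtain ⟨t, ht, hat⟩ := hT a ha
    have hπn : π ^ n ≠ 0 := pow_ne_zero n hπ
    obtain ⟨s, hs, hbs⟩ := hS ((a - t) / π ^ n) (by
      rw [norm_div, norm_pow]; exact div_le_one_of_le₀ hat (by positivity))
    refine ⟨t + π ^ n * s, Finset.mem_image.mpr ⟨(t, s), Finset.mem_product.mpr ⟨ht, hs⟩, rfl⟩, ?_⟩
    calc ‖a - (t + π ^ n * s)‖ = ‖π‖ ^ n * ‖(a - t) / π ^ n - s‖ := by
          rw [← norm_pow, ← norm_mul, mul_sub, mul_div_cancel₀ _ hπn, sub_sub]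
      _ ≤ ‖π‖ ^ n * ‖π‖ := by gcongr
      _ = ‖π‖ ^ (n + 1) := (pow_succ _ _).symm

theorem IsNALocalField.totallyBounded_closedBall_zero_one (hk : IsNALocalField k) :
    TotallyBounded (closedBall (0 : k) 1) := by
  obtain ⟨⟨π, hπ0, hπ1, hval⟩, S, hS⟩ := hk
  have hS' a (ha : ‖a‖ ≤ 1) : ∃ s ∈ S, ‖a - s‖ ≤ ‖π‖ := by
    obtain ⟨s, hs, has⟩ := hS a ha
    exact ⟨s, hs, norm_le_norm_uniformizer_of_norm_lt_one hπ0 hπ1 hval has⟩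
  refine totallyBounded_iff.mpr fun ε hε => ?_
  obtain ⟨n, hn⟩ := exists_pow_lt_of_lt_one hε hπ1
  obtain ⟨T, hT⟩ := exists_finset_forall_norm_sub_le_pow hS' (norm_pos_iff.mp hπ0) n
  refine ⟨T, T.finite_toSet, fun a ha => Set.mem_iUnion₂.mpr ?_⟩
  obtain ⟨t, ht, hat⟩ := hT a (by simpa using ha)
  exact ⟨t, ht, by rw [mem_ball, dist_eq_norm]; exact hat.trans_lt hn⟩

theorem IsNALocalField.properSpace [CompleteSpace k] (hk : IsNALocalField k) :
    ProperSpace k := by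
  obtain ⟨π, hπ0, hπ1, -⟩ := hk.1
  let _ : NontriviallyNormedField k :=
    { ‹NormedField k› with
      non_trivial := ⟨π⁻¹, by rw [norm_inv]; exact (one_lt_inv₀ hπ0).mpr hπ1⟩ }
  have hcompact : IsCompact (closedBall (0 : k) 1) :=
    isCompact_iff_totallyBounded_isComplete.mpr
      ⟨hk.totallyBounded_closedBall_zero_one, isClosed_closedBall.isComplete⟩
  have : LocallyCompactSpace k :=
    hcompact.locallyCompactSpace_of_mem_nhds_of_addGroup (closedBall_mem_nhds 0 one_pos)
  exact .of_nontriviallyNormedField_of_weaklyLocallyCompactSpace k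

end LocalField

/-- If `k` is a finite field with the trivial absolute value or a local
field, then every maximal ideal `m` of `C_bd(X,k)` has codimension 1: the composite
`k → C_bd(X,k) → C_bd(X,k)/m` is bijective. -/
theorem maximal_ideal_codimension_one {X : Type*} [TopologicalSpace X]
    (k : Type*) [NormedField k] [CompleteSpace k] [IsUltrametricDist k]
    (hk : IsTriviallyValuedFiniteField k ∨ IsNALocalField k)
    (m : Ideal (BoundedContinuousFunction X k)) (hm : m.IsMaximal) :
    Function.Bijective (fun a : k =>
      Ideal.Quotient.mk m (algebraMap k (BoundedContinuousFunction X k) a)) := by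
  have := hm
  have : ProperSpace k := hk.elim (fun hfin => have := hfin.1; inferInstance)
    IsNALocalField.properSpace
  refine ⟨((Ideal.Quotient.mk m).comp (algebraMap k _)).injective, fun q => ?_⟩
  obtain ⟨f, rfl⟩ := Ideal.Quotient.mk_surjective q
  obtain ⟨c, hc⟩ := Ideal.exists_sub_algebraMap_mem_of_approx hm.ne_top f fun _ hε =>
    BoundedContinuousFunction.exists_norm_sub_algebraMap_sub_le hm.isPrime f hε
  exact ⟨c, Ideal.Quotient.eq.mpr (by simpa using neg_mem hc)⟩
end

section
/- Suppose k is a local field. Then any two norms on the underlying k-algebra of C_bd(X,k) each making it a non-Archimedean Banach k-algebra are equivalent; in particular, every such complete algebra norm is equivalent to the supremum norm. -/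
/-- A norm on the `k`-algebra `A` making it a non-Archimedean Banach `k`-algebra: a complete
norm `N` with `N (x+y) ≤ max (N x) (N y)`, `N (x*y) ≤ N x * N y`, `N (a • x) = ‖a‖ * N x`
and `N 1 = 1`. Completeness is expressed by the convergence of Cauchy sequences. -/
structure NABanachAlgebraNorm (k : Type*) [NormedField k]
    (A : Type*) [Ring A] [Algebra k A] where
  toFun : A → ℝ
  nonneg : ∀ x, 0 ≤ toFun x
  eq_zero_iff : ∀ x, toFun x = 0 ↔ x = 0
  add_le : ∀ x y, toFun (x + y) ≤ max (toFun x) (toFun y)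
  mul_le : ∀ x y, toFun (x * y) ≤ toFun x * toFun y
  smul_eq : ∀ (a : k) (x : A), toFun (a • x) = ‖a‖ * toFun x
  one_eq : toFun 1 = 1
  complete : ∀ u : ℕ → A,
    (∀ ε : ℝ, 0 < ε → ∃ N : ℕ, ∀ i ≥ N, ∀ j ≥ N, toFun (u i - u j) < ε) →
    ∃ x : A, ∀ ε : ℝ, 0 < ε → ∃ N : ℕ, ∀ i ≥ N, toFun (u i - x) < ε

/-!
An element `u` with `N u < 1` makes `1 - u` invertible (geometric series), so an evaluation
`f ↦ f x`, being a character of `C_bd(X, k)`, satisfies `|f x| ≤ N f`: otherwise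
`1 - (f x)⁻¹ f` would be a unit vanishing at `x`. Hence every complete algebra norm dominates
the supremum norm, and the open mapping theorem, applied to the identity map between the two
Banach spaces, gives the reverse bound up to a constant.
-/

open scoped BoundedContinuousFunction

namespace NABanachAlgebraNorm

variable {k : Type*} [NormedField k] {A : Type*} [Ring A] [Algebra k A]
  (N : NABanachAlgebraNorm k A)

theorem map_zero : N.toFun 0 = 0 := (N.eq_zero_iff 0).mpr rfl

theorem map_neg (x : A) : N.toFun (-x) = N.toFun x := by
  rw [← neg_one_smul k x, N.smul_eq, norm_neg, norm_one, one_mul]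

def toRingNorm : RingNorm A where
  toFun := N.toFun
  map_zero' := N.map_zero
  add_le' x y := (N.add_le x y).trans
    (max_le (le_add_of_nonneg_right (N.nonneg y)) (le_add_of_nonneg_left (N.nonneg x)))
  neg' := N.map_neg
  mul_le' := N.mul_le
  eq_zero_of_map_eq_zero' x := (N.eq_zero_iff x).mp

def WithNorm (_N : NABanachAlgebraNorm k A) : Type _ := A

noncomputable instance : NormedRing N.WithNorm :=
  letI : Ring N.WithNorm := inferInstanceAs (Ring A)
  N.toRingNorm.toNormedRing

noncomputable instance : NormedSpace k N.WithNorm where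
  toModule := inferInstanceAs (Module k A)
  norm_smul_le a x := (N.smul_eq a x).le

instance : CompleteSpace N.WithNorm := by
  refine Metric.complete_of_cauchySeq_tendsto fun u hu => ?_
  simp only [Metric.cauchySeq_iff, dist_eq_norm] at hu
  obtain ⟨x, hx⟩ := N.complete u hu
  refine ⟨x, Metric.tendsto_atTop.mpr fun ε hε => ?_⟩
  obtain ⟨M, hM⟩ := hx ε hε
  exact ⟨M, fun n hn => (dist_eq_norm (u n) x).trans_lt (hM n hn)⟩

def WithNorm.linearEquiv : N.WithNorm ≃ₗ[k] A := LinearEquiv.refl k A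

theorem isUnit_one_sub {u : A} (hu : N.toFun u < 1) : IsUnit (1 - u) :=
  (Units.oneSub (R := N.WithNorm) u hu).isUnit

end NABanachAlgebraNorm

theorem NABanachAlgebraNorm.exists_le_mul_norm {k : Type*} [NontriviallyNormedField k]
    [CompleteSpace k] {A : Type*} [NormedRing A] [NormedAlgebra k A] [CompleteSpace A]
    (N : NABanachAlgebraNorm k A) (hN : ∀ x, ‖x‖ ≤ N.toFun x) :
    ∃ C, 0 < C ∧ ∀ x, N.toFun x ≤ C * ‖x‖ := by
  let e := WithNorm.linearEquiv N
  have he : Continuous e :=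
    AddMonoidHomClass.continuous_of_bound e 1 fun x => (hN x).trans_eq (one_mul _).symm
  exact (e.toContinuousLinearEquivOfContinuous he).symm.toContinuousLinearMap.bound

theorem BoundedContinuousFunction.isUnit_apply {X R : Type*} [TopologicalSpace X] [NormedRing R]
    {f : X →ᵇ R} (hf : IsUnit f) (x : X) : IsUnit (f x) :=
  hf.map ((Pi.evalMonoidHom (fun _ : X => R) x).comp BoundedContinuousFunction.coeFnMonoidHom)

theorem NABanachAlgebraNorm.norm_le {X k : Type*} [TopologicalSpace X] [NormedField k]
    (N : NABanachAlgebraNorm k (X →ᵇ k)) (f : X →ᵇ k) : ‖f‖ ≤ N.toFun f := by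
  refine (BoundedContinuousFunction.norm_le (N.nonneg f)).mpr fun x => ?_
  by_contra! hlt
  have hfx : 0 < ‖f x‖ := (N.nonneg f).trans_lt hlt
  have hu : N.toFun ((f x)⁻¹ • f) < 1 := by
    rwa [N.smul_eq, norm_inv, inv_mul_lt_one₀ hfx]
  have hvanish : (1 - (f x)⁻¹ • f) x = 0 := by
    simp [inv_mul_cancel₀ (norm_pos_iff.mp hfx)]
  simpa [hvanish] using BoundedContinuousFunction.isUnit_apply (N.isUnit_one_sub hu) x

theorem complete_algebra_norms_equivalent_general {X : Type*} [TopologicalSpace X]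
    (k : Type*) [NormedField k] [CompleteSpace k]
    (hk : IsNALocalField k)
    (N₁ N₂ : NABanachAlgebraNorm k (BoundedContinuousFunction X k)) :
    (∃ c C : ℝ, 0 < c ∧ 0 < C ∧ ∀ f : BoundedContinuousFunction X k,
      c * N₁.toFun f ≤ N₂.toFun f ∧ N₂.toFun f ≤ C * N₁.toFun f) ∧
    (∃ c C : ℝ, 0 < c ∧ 0 < C ∧ ∀ f : BoundedContinuousFunction X k,
      c * ‖f‖ ≤ N₁.toFun f ∧ N₁.toFun f ≤ C * ‖f‖) := by
  obtain ⟨⟨π, hπ0, hπ1, -⟩, -⟩ := hk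
  let : NontriviallyNormedField k := .ofNormNeOne ⟨π, norm_pos_iff.mp hπ0, hπ1.ne⟩
  obtain ⟨C₁, hC₁, hb₁⟩ := N₁.exists_le_mul_norm N₁.norm_le
  obtain ⟨C₂, hC₂, hb₂⟩ := N₂.exists_le_mul_norm N₂.norm_le
  refine ⟨⟨C₁⁻¹, C₂, inv_pos.mpr hC₁, hC₂, fun f => ⟨?_, ?_⟩⟩,
    ⟨1, C₁, one_pos, hC₁, fun f => ⟨(one_mul ‖f‖).trans_le (N₁.norm_le f), hb₁ f⟩⟩⟩
  · rw [inv_mul_le_iff₀ hC₁]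
    exact (hb₁ f).trans (by gcongr; exact N₂.norm_le f)
  · exact (hb₂ f).trans (by gcongr; exact N₁.norm_le f)

/-- If `k` is a local field, then any two norms on the underlying
`k`-algebra of `C_bd(X,k)` making it a non-Archimedean Banach `k`-algebra are equivalent;
in particular, every such complete algebra norm is equivalent to the supremum norm. -/
theorem complete_algebra_norms_equivalent {X : Type*} [TopologicalSpace X]
    (k : Type*) [NormedField k] [CompleteSpace k] [IsUltrametricDist k]
    (hk : IsNALocalField k)
    (N₁ N₂ : NABanachAlgebraNorm k (BoundedContinuousFunction X k)) :
    (∃ c C : ℝ, 0 < c ∧ 0 < C ∧ ∀ f : BoundedContinuousFunction X k,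
      c * N₁.toFun f ≤ N₂.toFun f ∧ N₂.toFun f ≤ C * N₁.toFun f) ∧
    (∃ c C : ℝ, 0 < c ∧ 0 < C ∧ ∀ f : BoundedContinuousFunction X k,
      c * ‖f‖ ≤ N₁.toFun f ∧ N₁.toFun f ≤ C * ‖f‖) :=
  complete_algebra_norms_equivalent_general k hk N₁ N₂
end

section
/- Suppose k is a local field and let A be a non-Archimedean Banach k-algebra. Then every injective k-algebra homomorphism φ : C_bd(X,k) → A whose image is closed in A is continuous. -/
/-!
If `‖φ f‖ < |f(x)|` for some point `x`, then `g = f(x)⁻¹ • f` satisfies `‖φ g‖ < 1`, so the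
Neumann series `∑ (φ g)ⁿ` inverts `1 - φ g` in `A`. Its partial sums lie in the closed range of
`φ`, hence so does the inverse, and injectivity makes `1 - g` a unit of `C_bd(X,k)`, which is
absurd since `(1 - g)(x) = 0`. Thus `‖f‖ ≤ ‖φ f‖`; a linear map between Banach spaces that is
bounded below and has closed range has a closed graph, so `φ` is continuous.
-/

open Filter Topology
open scoped BoundedContinuousFunction

theorem RingHom.isUnit_one_sub_of_norm_map_lt_one {B A : Type*} [Ring B] [NormedRing A]
    [CompleteSpace A] (φ : B →+* A) (hinj : Function.Injective φ)
    (hcl : IsClosed (Set.range φ)) {b : B} (hb : ‖φ b‖ < 1) : IsUnit (1 - b) := by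
  have : CompleteSpace φ.range := (φ.coe_range ▸ hcl).completeSpace_coe
  let e : B ≃+* φ.range := RingEquiv.ofBijective φ.rangeRestrict
    ⟨fun _ _ h => hinj (congrArg Subtype.val h), φ.rangeRestrict_surjective⟩
  refine (isUnit_map_iff e _).1 ?_
  simpa only [map_sub, map_one] using isUnit_one_sub_of_norm_lt_one (x := e b) hb

theorem LinearMap.continuous_of_isClosed_range_of_norm_le {𝕜 E F : Type*}
    [NontriviallyNormedField 𝕜] [NormedAddCommGroup E] [NormedSpace 𝕜 E] [CompleteSpace E]
    [NormedAddCommGroup F] [NormedSpace 𝕜 F] [CompleteSpace F] (f : E →ₗ[𝕜] F)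
    (hcl : IsClosed (Set.range f)) (C : ℝ) (hf : ∀ x, ‖x‖ ≤ C * ‖f x‖) : Continuous f := by
  refine f.continuous_of_seq_closed_graph fun u x y hu hfu => ?_
  obtain ⟨z, rfl⟩ := hcl.mem_of_tendsto hfu (.of_forall fun n => ⟨u n, rfl⟩)
  have huz : Tendsto u atTop (𝓝 z) := by
    rw [tendsto_iff_norm_sub_tendsto_zero] at hfu ⊢
    refine squeeze_zero (fun _ => norm_nonneg _) (fun n => ?_) (by simpa using hfu.const_mul C)
    simpa only [map_sub] using hf (u n - z)
  rw [tendsto_nhds_unique hu huz]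

theorem BoundedContinuousFunction.norm_le_norm_map {X k A : Type*} [TopologicalSpace X]
    [NormedField k] [NormedRing A] [NormedAlgebra k A] [CompleteSpace A]
    (φ : (X →ᵇ k) →ₐ[k] A) (hinj : Function.Injective φ) (hcl : IsClosed (Set.range φ))
    (f : X →ᵇ k) : ‖f‖ ≤ ‖φ f‖ := by
  refine (norm_le (norm_nonneg _)).2 fun x => ?_
  by_contra! hlt
  have hfx : f x ≠ 0 := norm_pos_iff.1 ((norm_nonneg _).trans_lt hlt)
  set g := (f x)⁻¹ • f
  have hg : ‖φ g‖ < 1 := by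
    rw [map_smul, norm_smul, norm_inv, inv_mul_lt_iff₀ (norm_pos_iff.2 hfx), mul_one]
    exact hlt
  obtain ⟨h, hh⟩ := (φ.toRingHom.isUnit_one_sub_of_norm_map_lt_one hinj hcl hg).exists_right_inv
  have hgx : g x = 1 := by simp [g, hfx]
  simpa [hgx] using congrArg (· x) hh

theorem automatic_continuity_general {X : Type*} [TopologicalSpace X]
    (k : Type*) [NormedField k] [CompleteSpace k]
    (hk : IsNALocalField k)
    (A : Type*) [NormedRing A] [NormedAlgebra k A] [CompleteSpace A]
    (φ : BoundedContinuousFunction X k →ₐ[k] A) (hinj : Function.Injective φ)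
    (hcl : IsClosed (Set.range (⇑φ))) : Continuous (⇑φ) := by
  obtain ⟨⟨π, hπ0, hπ1, -⟩, -⟩ := hk
  let : NontriviallyNormedField k := .ofNormNeOne ⟨π, norm_pos_iff.1 hπ0, hπ1.ne⟩
  exact φ.toLinearMap.continuous_of_isClosed_range_of_norm_le hcl 1 fun f => by
    simpa using BoundedContinuousFunction.norm_le_norm_map φ hinj hcl f

/-- (Weak automatic continuity.) If `k` is a local field and `A` is a
non-Archimedean Banach `k`-algebra, then every injective `k`-algebra homomorphism
`φ : C_bd(X,k) → A` whose image is closed in `A` is continuous. -/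
theorem automatic_continuity {X : Type*} [TopologicalSpace X]
    (k : Type*) [NormedField k] [CompleteSpace k] [IsUltrametricDist k]
    (hk : IsNALocalField k)
    (A : Type*) [NormedRing A] [NormedAlgebra k A] [CompleteSpace A]
    [IsUltrametricDist A] [NormOneClass A]
    (φ : BoundedContinuousFunction X k →ₐ[k] A) (hinj : Function.Injective φ)
    (hcl : IsClosed (Set.range (⇑φ))) : Continuous (⇑φ) :=
  automatic_continuity_general k hk A φ hinj hcl
end
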